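/- Let Λ be a non-degenerate lattice (finitely generated free ℤ-module with nondegenerate symmetric bilinear form) and E ⊊ Λ a proper saturated sublattice whose orthogonal complement E⊥ contains a vector x with x·x > 0. Then there exists v in Λ ⊗ ℝ with v·v > 0 such that E = {w ∈ Λ : v·w = 0}. -/

import Mathlib

/-!
Let `W ⊆ Λ_ℝ` be the orthogonal complement of `E_ℝ`. Non-degeneracy gives `W^⊥ = E_ℝ`, and
saturation gives `E_ℝ ∩ Λ = E`; hence every `w ∈ Λ \ E` pairs non-trivially with `W`, i.e.
cuts out a proper hyperplane of `W`. There are only countably many such `w`, and `W` contains the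
non-empty open cone `{v | v·v > 0}` (it contains `x`), so by Baire some `v` in the cone avoids all
the hyperplanes; this `v` works.
-/
open scoped TensorProduct Matrix

theorem Submodule.isTorsionFree_quotient {R M : Type*} [Ring R] [Nontrivial R] [AddCommGroup M]
    [Module R M] (p : Submodule R M) (hp : ∀ (r : R) (x : M), r ≠ 0 → r • x ∈ p → x ∈ p) :
    Module.IsTorsionFree R (M ⧸ p) := by
  refine .of_smul_eq_zero fun r q hrq => or_iff_not_imp_left.mpr fun hr => ?_
  obtain ⟨m, rfl⟩ := Submodule.Quotient.mk_surjective p q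
  rw [← Submodule.Quotient.mk_smul, Submodule.Quotient.mk_eq_zero] at hrq
  rw [Submodule.Quotient.mk_eq_zero]
  exact hp r m hr hrq

theorem Submodule.mem_of_one_tmul_mem_baseChange {R A M : Type*} [CommRing R] [IsDedekindDomain R]
    [Semiring A] [Algebra R A] [FaithfulSMul R A] [AddCommGroup M] [Module R M]
    {p : Submodule R M} (hp : ∀ (r : R) (x : M), r ≠ 0 → r • x ∈ p → x ∈ p) {m : M}
    (hm : (1 : A) ⊗ₜ[R] m ∈ p.baseChange A) : m ∈ p := by
  have := p.isTorsionFree_quotient hp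
  obtain ⟨t, ht⟩ := hm
  rw [← Submodule.Quotient.mk_eq_zero, ← Submodule.mkQ_apply]
  apply Module.Flat.tensorProduct_mk_injective R (M ⧸ p) A
  calc (1 : A) ⊗ₜ[R] p.mkQ m = p.mkQ.baseChange A ((1 : A) ⊗ₜ[R] m) := rfl
    _ = (p.mkQ ∘ₗ p.subtype).baseChange A t := by rw [← ht, LinearMap.baseChange_comp]; rfl
    _ = TensorProduct.mk R A (M ⧸ p) 1 0 := by
      rw [show p.mkQ ∘ₗ p.subtype = 0 by ext; simp]
      simp

theorem LinearMap.BilinForm.toMatrix_baseChange {R A M ι : Type*} [CommRing R] [CommRing A]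
    [Algebra R A] [AddCommGroup M] [Module R M] [Fintype ι] [DecidableEq ι]
    (B : LinearMap.BilinForm R M) (b : Module.Basis ι R M) :
    toMatrix (b.baseChange A) (B.baseChange A) = (toMatrix b B).map (algebraMap R A) := by
  ext i j
  simp [Algebra.smul_def]

theorem LinearMap.BilinForm.Nondegenerate.baseChange {R A M : Type*} [CommRing R] [IsDomain R]
    [CommRing A] [IsDomain A] [Algebra R A] [FaithfulSMul R A] [AddCommGroup M] [Module R M]
    [Module.Free R M] [Module.Finite R M] {B : LinearMap.BilinForm R M} (hB : B.Nondegenerate) :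
    (B.baseChange A).Nondegenerate := by
  classical
  let b := Module.Free.chooseBasis R M
  rw [nondegenerate_iff_det_ne_zero (b.baseChange A), toMatrix_baseChange,
    ← RingHom.mapMatrix_apply, ← RingHom.map_det,
    map_ne_zero_iff _ (FaithfulSMul.algebraMap_injective R A)]
  exact (nondegenerate_iff_det_ne_zero b).mp hB

theorem Submodule.exists_mem_forall_notMem_of_countable {𝕜 V ι : Type*} [NontriviallyNormedField 𝕜]
    [CompleteSpace 𝕜] [NormedAddCommGroup V] [NormedSpace 𝕜 V] [FiniteDimensional 𝕜 V]
    [Countable ι] {U : Set V} (hU : IsOpen U) (hne : U.Nonempty) (p : ι → Submodule 𝕜 V)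
    (hp : ∀ i, p i ≠ ⊤) : ∃ y ∈ U, ∀ i, y ∉ p i := by
  have : CompleteSpace V := FiniteDimensional.complete 𝕜 V
  have hdense : Dense (⋂ i, (p i : Set V)ᶜ) := by
    refine dense_iInter_of_isOpen (fun i => (p i).closed_of_finiteDimensional.isOpen_compl)
      fun i => ?_
    rw [← interior_eq_empty_iff_dense_compl, ← Set.not_nonempty_iff_eq_empty]
    exact fun h => hp i ((p i).eq_top_of_nonempty_interior' h)
  obtain ⟨y, hyU, hy⟩ := hdense.inter_open_nonempty U hU hne
  exact ⟨y, hyU, Set.mem_iInter.mp hy⟩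

theorem LinearMap.BilinForm.exists_pos_forall_notMem_of_countable {V ι : Type*} [AddCommGroup V]
    [Module ℝ V] [FiniteDimensional ℝ V] [Countable ι] (Q : LinearMap.BilinForm ℝ V) {x : V}
    (hx : 0 < Q x x) (p : ι → Submodule ℝ V) (hp : ∀ i, p i ≠ ⊤) :
    ∃ y, 0 < Q y y ∧ ∀ i, y ∉ p i := by
  let e := (Module.finBasis ℝ V).equivFun
  let M := toMatrix' (Q.compl₁₂ e.symm.toLinearMap e.symm.toLinearMap)
  have hQ : ∀ y, Q (e.symm y) (e.symm y) = y ⬝ᵥ M *ᵥ y := fun y => by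
    rw [← Matrix.toBilin'_apply', Matrix.toBilin'_toMatrix']; rfl
  have hU : IsOpen {y | 0 < y ⬝ᵥ M *ᵥ y} :=
    isOpen_lt continuous_const <|
      continuous_id.dotProduct (continuous_const.matrix_mulVec continuous_id)
  obtain ⟨y, hy, hyp⟩ := Submodule.exists_mem_forall_notMem_of_countable hU ⟨e x, by simpa [← hQ]⟩
    (fun i => (p i).map (e : V →ₗ[ℝ] _)) (fun i => by simpa using hp i)
  refine ⟨e.symm y, (hQ y).symm ▸ hy, fun i => ?_⟩
  simpa [Submodule.mem_map_equiv] using hyp i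

theorem LinearMap.BilinForm.one_tmul_mem_orthogonal_baseChange {R A M : Type*} [CommRing R]
    [CommRing A] [Algebra R A] [AddCommGroup M] [Module R M] {B : LinearMap.BilinForm R M}
    {p : Submodule R M} {m : M} (hm : m ∈ B.orthogonal p) :
    (1 : A) ⊗ₜ[R] m ∈ (B.baseChange A).orthogonal (p.baseChange A) := by
  rintro _ ⟨t, rfl⟩
  induction t using TensorProduct.induction_on with
  | zero => simp
  | tmul a e => simp [hm e e.2]
  | add t₁ t₂ h₁ h₂ => simp_all

theorem stmt0_general (Λ : Type*) [AddCommGroup Λ] [Module ℤ Λ]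
    [Module.Free ℤ Λ] [Module.Finite ℤ Λ]
    (B : LinearMap.BilinForm ℤ Λ) (hsymm : B.IsSymm) (hnd : B.Nondegenerate)
    (E : Submodule ℤ Λ)
    (hsat : ∀ (n : ℤ) (x : Λ), n ≠ 0 → n • x ∈ E → x ∈ E)
    (x : Λ) (hx : ∀ e ∈ E, B x e = 0) (hxpos : 0 < B x x) :
    ∃ v : ℝ ⊗[ℤ] Λ, 0 < (B.baseChange ℝ) v v ∧
      E = {w : Λ | (B.baseChange ℝ) v (1 ⊗ₜ w) = 0} := by
  -- `hsat` is elaborated with `zsmul`, not with the given `Module ℤ Λ` action; the two agree.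
  obtain rfl : ‹Module ℤ Λ› = AddCommGroup.toIntModule Λ := Subsingleton.elim _ _
  set BR := B.baseChange ℝ
  have hsymmR : BR.IsSymm := LinearMap.BilinForm.isSymm_iff.mpr
    (LinearMap.BilinForm.IsSymm.baseChange ℝ (LinearMap.BilinForm.isSymm_iff.mp hsymm))
  let W := BR.orthogonal (E.baseChange ℝ)
  have hxW : (1 : ℝ) ⊗ₜ[ℤ] x ∈ W :=
    LinearMap.BilinForm.one_tmul_mem_orthogonal_baseChange fun e he => hsymm.eq x e ▸ hx e he
  have hxpos' : 0 < BR.restrict W ⟨_, hxW⟩ ⟨_, hxW⟩ := by simpa [BR] using hxpos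
  let p (w : {w : Λ // w ∉ E}) : Submodule ℝ W :=
    LinearMap.ker ((BR.flip (1 ⊗ₜ w.1)).domRestrict W)
  have hp (w : {w : Λ // w ∉ E}) : p w ≠ ⊤ := by
    refine fun h => w.2 (Submodule.mem_of_one_tmul_mem_baseChange (A := ℝ) hsat ?_)
    rw [← BR.orthogonal_orthogonal hnd.baseChange hsymmR.isRefl (E.baseChange ℝ)]
    exact fun v hv => LinearMap.congr_fun (LinearMap.ker_eq_top.mp h) ⟨v, hv⟩
  have : Countable Λ := Finsupp.Countable.of_moduleFinite (R := ℤ)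
  obtain ⟨y, hypos, hy⟩ :=
    (BR.restrict W).exists_pos_forall_notMem_of_countable (V := W) hxpos' p hp
  refine ⟨y, hypos, Set.ext fun w => ⟨fun hw => ?_, fun hw => ?_⟩⟩
  · exact (hsymmR.eq y _).trans (y.2 _ (Submodule.tmul_mem_baseChange_of_mem 1 hw))
  · by_contra hwE
    exact hy ⟨w, hwE⟩ hw

/-- If `Λ` is a non-degenerate lattice and `E ⊊ Λ` a proper saturated
sublattice whose orthogonal complement contains a vector of positive self-intersection,
then there is `v ∈ Λ ⊗ ℝ` with `v·v > 0` such that `E = v^⊥ ∩ Λ`. -/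
theorem stmt0 (Λ : Type*) [AddCommGroup Λ] [Module ℤ Λ]
    [Module.Free ℤ Λ] [Module.Finite ℤ Λ]
    (B : LinearMap.BilinForm ℤ Λ) (hsymm : B.IsSymm) (hnd : B.Nondegenerate)
    (E : Submodule ℤ Λ) (hproper : E ≠ ⊤)
    (hsat : ∀ (n : ℤ) (x : Λ), n ≠ 0 → n • x ∈ E → x ∈ E)
    (x : Λ) (hx : ∀ e ∈ E, B x e = 0) (hxpos : 0 < B x x) :
    ∃ v : ℝ ⊗[ℤ] Λ, 0 < (B.baseChange ℝ) v v ∧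
      E = {w : Λ | (B.baseChange ℝ) v (1 ⊗ₜ w) = 0} :=
  stmt0_general Λ B hsymm hnd E hsat x hx hxpos
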